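/- (Theorem 5.5 of the paper, one-dimensional case, exact form.) Let η ∈ ℕ and ℓ ∈ ℤ. Let W ∈ ℚ⁴ be any integrable random vector with E[W] = 0 (the binary-truncation errors of Steps 2 and decompression Step 2); let θ₁,…,θ₆ be independent uniform on {−1/2,0} (the rounding errors of the lossy forward transform); and let R ∈ ℤ⁴ have independent components R_j = Σ_{i=0}^{η} D_{j,i}·(−2)^i with independent fair Bernoulli digits D_{j,i} ∈ {0,1} (the truncated low negabinary digits of Step 8). Then the expected value of the total decompressed error 2^ℓ·Linv·(W + Θ(θ₁,…,θ₆) − R) equals 2^ℓ·Linv·( E₁ + (((−2)^{η+1} − 1)/6)·𝟙 ), which is nonzero; hence ZFP's compression error is biased. -/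

import Mathlib

open Matrix

/-- ZFP's backward decorrelating transform. -/
def Linv : Matrix (Fin 4) (Fin 4) ℚ :=
  (1 / 4 : ℚ) • !![4, 6, -4, -1; 4, 2, 4, 5; 4, -2, 4, -5; 4, -6, -4, 1]

/-- The error form `Θ(θ₁,…,θ₆)`. -/
def Theta (θ : Fin 6 → ℚ) : Fin 4 → ℚ :=
  ![-((θ 0 + θ 1) / 2 + θ 3),
    -((5 * θ 0 - θ 1) / 8 - (5 / 4) * θ 2 - θ 4 / 2 - θ 5),
    -((θ 1 - θ 0) / 2 - θ 3),
    -(-(θ 0 + 3 * θ 1) / 4 + θ 2 / 2 + θ 4)]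

/-- `E₁ = (1/2, -9/16, -1/4, 1/8)`. -/
def E1 : Fin 4 → ℚ := ![1 / 2, -(9 / 16), -(1 / 4), 1 / 8]

/-!
Everything is linear, so the mean error is `2^ℓ · Linv · (E[W] + Θ(E[θ]) - E[R])`. Uniformity of
`θ` on `{-1/2, 0}⁶` gives `E[θ] = -1/4 · 𝟙`, and `Θ(-1/4 · 𝟙) = E₁`; uniformity of the digits
gives `E[D_{j,i}] = 1/2`, hence `E[R_j] = ½ ∑_{i ≤ η} (-2)^i = (1 - (-2)^{η+1})/6`. The mean is
nonzero because `Linv` is invertible (its inverse is the forward transform `L`) and `E₁` is not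
a multiple of `𝟙`.
-/

open Finset Function
open scoped BigOperators

theorem expect_comp_apply {ι α M : Type*} [Fintype ι] [DecidableEq ι] [Fintype α] [Nonempty α]
    [AddCommMonoid M] [Module ℚ≥0 M] (k : ι) (c : α → M) :
    𝔼 b : ι → α, c (b k) = 𝔼 a, c a := by
  rw [Fintype.expect_equiv (Equiv.funSplitAt k α) (fun b => c (b k)) (fun x => c x.1)
    (fun _ => rfl), ← univ_product_univ, expect_product]
  simp only [Fintype.expect_const]

theorem sum_mul_comp_eq_expect_of_uniform {Ω α β 𝕜 : Type*} [Fintype Ω] [Fintype α] [Nonempty α]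
    [DecidableEq β] [Field 𝕜] [LinearOrder 𝕜] [IsStrictOrderedRing 𝕜]
    {p : Ω → 𝕜} (hp0 : ∀ ω, 0 ≤ p ω) (hp1 : ∑ ω, p ω = 1)
    {f : Ω → β} {e : α → β} (he : Injective e)
    (hf : ∀ a, ∑ ω with f ω = e a, p ω = 1 / Fintype.card α) (g : β → 𝕜) :
    ∑ ω, p ω * g (f ω) = 𝔼 a, g (e a) := by
  set S := univ.image e
  have sum_fibers : ∀ h : Ω → 𝕜, ∑ ω with f ω ∈ S, h ω = ∑ a, ∑ ω with f ω = e a, h ω := by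
    intro h
    rw [← sum_fiberwise_of_maps_to (t := S) (g := f) (fun ω hω => (mem_filter.1 hω).2),
      sum_image he.injOn]
    refine sum_congr rfl fun a _ => ?_
    rw [filter_filter]
    congr 1; ext ω; simp only [mem_filter, mem_univ, true_and]
    exact ⟨fun h => h.2, fun h => ⟨h ▸ mem_image_of_mem e (mem_univ a), h⟩⟩
  have mass_on_image : ∑ ω with f ω ∈ S, p ω = 1 := by
    rw [sum_fibers, sum_congr rfl fun a _ => hf a]
    simp
  have null_off_image : ∀ ω, f ω ∉ S → p ω = 0 := by
    have : ∑ ω with f ω ∉ S, p ω = 0 := by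
      linarith [sum_filter_add_sum_filter_not univ (fun ω => f ω ∈ S) p]
    intro ω hω
    exact (sum_eq_zero_iff_of_nonneg fun ω _ => hp0 ω).1 this ω (by simpa using hω)
  calc ∑ ω, p ω * g (f ω) = ∑ ω with f ω ∈ S, p ω * g (f ω) := by
        refine (sum_filter_of_ne fun ω _ hω => ?_).symm
        by_contra h; exact hω (by rw [null_off_image ω h, zero_mul])
    _ = ∑ a, ∑ ω with f ω = e a, p ω * g (e a) := by
        rw [sum_fibers]
        exact sum_congr rfl fun a _ => sum_congr rfl fun ω hω => by rw [(mem_filter.1 hω).2]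
    _ = 𝔼 a, g (e a) := by
        simp_rw [← sum_mul, hf, Fintype.expect_eq_sum_div_card, sum_div]
        simp [div_eq_inv_mul]

theorem sum_mul_apply_eq_expect_of_uniform {Ω ι α β 𝕜 : Type*} [Fintype Ω] [Fintype ι]
    [DecidableEq ι] [Fintype α] [Nonempty α] [DecidableEq β]
    [Field 𝕜] [LinearOrder 𝕜] [IsStrictOrderedRing 𝕜]
    {p : Ω → 𝕜} (hp0 : ∀ ω, 0 ≤ p ω) (hp1 : ∑ ω, p ω = 1)
    {f : Ω → ι → β} {c : α → β} (hc : Injective c)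
    (hf : ∀ s : ι → α, ∑ ω with f ω = c ∘ s, p ω = 1 / Fintype.card (ι → α))
    (g : β → 𝕜) (k : ι) :
    ∑ ω, p ω * g (f ω k) = 𝔼 a, g (c a) := by
  rw [sum_mul_comp_eq_expect_of_uniform hp0 hp1 hc.comp_left hf (fun v => g (v k))]
  exact expect_comp_apply k (g ∘ c)

def L : Matrix (Fin 4) (Fin 4) ℚ :=
  (1 / 16 : ℚ) • !![4, 4, 4, 4; 5, 1, -1, -5; -4, 4, 4, -4; -2, 6, -6, 2]

theorem L_mul_Linv : L * Linv = 1 := by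
  ext i j
  fin_cases i <;> fin_cases j <;> simp [L, Linv, Matrix.mul_apply, Fin.sum_univ_four] <;> norm_num

theorem Linv_mulVec_injective : Injective Linv.mulVec := by
  intro u v h
  simpa [Matrix.mulVec_mulVec, L_mul_Linv] using congrArg L.mulVec h

def thetaLinearMap : (Fin 6 → ℚ) →ₗ[ℚ] Fin 4 → ℚ where
  toFun := Theta
  map_add' u v := by ext j; fin_cases j <;> simp [Theta] <;> ring
  map_smul' c v := by ext j; fin_cases j <;> simp [Theta] <;> ring

theorem Theta_const : Theta (fun _ => -(1 / 4)) = E1 := by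
  ext j; fin_cases j <;> norm_num [Theta, E1]

theorem E1_add_const_ne_zero (c : ℚ) : (fun j => E1 j + c) ≠ 0 := by
  intro h
  have h0 : E1 0 + c = 0 := congrFun h 0
  have h1 : E1 1 + c = 0 := congrFun h 1
  norm_num [E1] at h0 h1
  linarith

theorem sum_smul_Theta_of_uniform {Ω : Type*} [Fintype Ω] {p : Ω → ℚ} (hp0 : ∀ ω, 0 ≤ p ω)
    (hp1 : ∑ ω, p ω = 1) (θ : Ω → Fin 6 → ℚ)
    (hθ : ∀ s : Fin 6 → Fin 2,
      ∑ ω with θ ω = (fun j => ![(-(1 / 2) : ℚ), 0] (s j)), p ω = 1 / 2 ^ 6) :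
    ∑ ω, p ω • Theta (θ ω) = E1 := by
  have hmean : ∑ ω, p ω • θ ω = fun _ => -(1 / 4) := by
    ext k
    have hinj : Injective ![(-(1 / 2) : ℚ), 0] := by
      intro a b; fin_cases a <;> fin_cases b <;> norm_num
    have hθ' : ∀ s : Fin 6 → Fin 2, ∑ ω with θ ω = ![(-(1 / 2) : ℚ), 0] ∘ s, p ω =
        1 / Fintype.card (Fin 6 → Fin 2) := by
      intro s
      rw [show (Fintype.card (Fin 6 → Fin 2) : ℚ) = 2 ^ 6 by norm_num]
      exact hθ s
    simp only [Finset.sum_apply, Pi.smul_apply, smul_eq_mul]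
    refine (sum_mul_apply_eq_expect_of_uniform hp0 hp1 hinj hθ' id k).trans ?_
    norm_num [Fintype.expect_eq_sum_div_card]
  calc ∑ ω, p ω • Theta (θ ω) = thetaLinearMap (∑ ω, p ω • θ ω) := by
        simp only [map_sum, map_smul]; rfl
    _ = E1 := by rw [hmean]; exact Theta_const

theorem sum_smul_negabinary_of_uniform {Ω ι : Type*} [Fintype Ω] [Fintype ι] [DecidableEq ι]
    {p : Ω → ℚ} (hp0 : ∀ ω, 0 ≤ p ω) (hp1 : ∑ ω, p ω = 1) (n : ℕ) (D : Ω → ι → Fin n → Fin 2)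
    (hD : ∀ b, ∑ ω with D ω = b, p ω = 1 / 2 ^ (Fintype.card ι * n)) :
    ∑ ω, p ω • (fun j => ∑ i : Fin n, ((D ω j i : ℕ) : ℚ) * (-2) ^ (i : ℕ)) =
      fun _ => (1 - (-2) ^ n) / 6 := by
  have hdigit : ∀ j i, ∑ ω, p ω * ((D ω j i : ℕ) : ℚ) = 1 / 2 := by
    intro j i
    have hD' : ∀ b : ι → Fin n → Fin 2, ∑ ω with D ω = id ∘ b, p ω =
        1 / Fintype.card (ι → Fin n → Fin 2) := by
      simpa [← pow_mul, mul_comm] using hD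
    rw [sum_mul_apply_eq_expect_of_uniform hp0 hp1 injective_id hD' (fun r => ((r i : ℕ) : ℚ)) j]
    exact (expect_comp_apply i (fun a : Fin 2 => ((a : ℕ) : ℚ))).trans
      (by simp [Fintype.expect_eq_sum_div_card])
  ext j
  simp only [Finset.sum_apply, Pi.smul_apply, smul_eq_mul, mul_sum]
  rw [sum_comm]
  simp_rw [← mul_assoc, ← sum_mul, hdigit, ← mul_sum,
    Fin.sum_univ_eq_sum_range (fun i => (-2 : ℚ) ^ i), geom_sum_eq (by norm_num : (-2 : ℚ) ≠ 1)]
  ring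

/-- **Theorem 5.5 (1-d, exact form).**  On a (finite) probability space
`(Ω, p)`: `W` is any (automatically integrable) random vector with `E[W] = 0`;
`θ` is uniform on `{-1/2,0}^6` (i.e. `θ₁,…,θ₆` independent uniform on
`{-1/2,0}`); and `R` has components `R_j = ∑_{i≤η} D_{j,i} (-2)^i` where the
bits `D_{j,i}` are jointly uniform (independent fair Bernoulli).  Then the
expected total decompressed error `E[2^ℓ · Linv · (W + Θ(θ) - R)]` equals
`2^ℓ · Linv · (E₁ + ((-2)^{η+1} - 1)/6 · 𝟙)`, which is nonzero: ZFP's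
compression error is biased. -/
theorem total_error_biased (η : ℕ) (ℓ : ℤ) (Ω : Type*) [Fintype Ω]
    (p : Ω → ℚ) (hp0 : ∀ ω, 0 ≤ p ω) (hp1 : ∑ ω, p ω = 1)
    (W : Ω → Fin 4 → ℚ) (hW : ∀ i, ∑ ω, p ω * W ω i = 0)
    (θ : Ω → Fin 6 → ℚ)
    (hθ : ∀ s : Fin 6 → Fin 2,
      ∑ ω ∈ Finset.univ.filter (fun ω => θ ω = fun j => ![(-(1 / 2) : ℚ), 0] (s j)), p ω =
        1 / 2 ^ 6)
    (D : Ω → Fin 4 → Fin (η + 1) → Fin 2)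
    (hD : ∀ b : Fin 4 → Fin (η + 1) → Fin 2,
      ∑ ω ∈ Finset.univ.filter (fun ω => D ω = b), p ω = 1 / 2 ^ (4 * (η + 1)))
    (R : Ω → Fin 4 → ℚ)
    (hR : ∀ ω j, R ω j = ∑ i : Fin (η + 1), ((D ω j i : ℕ) : ℚ) * (-2) ^ (i : ℕ)) :
    (fun i => ∑ ω, p ω *
        ((2 : ℚ) ^ ℓ * Linv.mulVec (fun j => W ω j + Theta (θ ω) j - R ω j) i)) =
      (fun i => (2 : ℚ) ^ ℓ *
        Linv.mulVec (fun j => E1 j + ((-2 : ℚ) ^ (η + 1) - 1) / 6) i) ∧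
      (fun i => (2 : ℚ) ^ ℓ *
        Linv.mulVec (fun j => E1 j + ((-2 : ℚ) ^ (η + 1) - 1) / 6) i) ≠ 0 := by
  set v : Fin 4 → ℚ := fun j => E1 j + ((-2 : ℚ) ^ (η + 1) - 1) / 6
  have hW_mean : ∑ ω, p ω • W ω = 0 := funext fun i => by simpa [Finset.sum_apply] using hW i
  have hR_mean : ∑ ω, p ω • R ω = fun _ => (1 - (-2) ^ (η + 1)) / 6 := by
    rw [show R = _ from funext fun ω => funext (hR ω)]
    exact sum_smul_negabinary_of_uniform hp0 hp1 (η + 1) D (by simpa using hD)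
  have hmean : ∑ ω, p ω • (W ω + Theta (θ ω) - R ω) = v := by
    simp only [smul_sub, smul_add, sum_add_distrib, sum_sub_distrib, hW_mean, hR_mean,
      sum_smul_Theta_of_uniform hp0 hp1 θ hθ]
    ext j
    simp only [v, zero_add, Pi.sub_apply]
    ring
  refine ⟨funext fun i => ?_, fun h => ?_⟩
  · have hi := congrArg (fun x => (2 : ℚ) ^ ℓ * Linv.mulVec x i) hmean
    simp only [Matrix.mulVec_sum, Matrix.mulVec_smul, Finset.sum_apply, Pi.smul_apply,
      smul_eq_mul, mul_sum, mul_left_comm] at hi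
    exact hi
  · have hv : Linv.mulVec v = Linv.mulVec 0 := by
      rw [Matrix.mulVec_zero]
      exact funext fun i => (mul_eq_zero.1 (congrFun h i)).resolve_left (zpow_ne_zero ℓ two_ne_zero)
    exact E1_add_const_ne_zero _ (Linv_mulVec_injective hv)
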